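/- arXiv:2411.03947 — 2 statements merged into one kernel-verified Lean document; each statement's English description precedes it below -/
import Mathlib

section
/- Let {M_i : i ∈ I} be a family of monoids. The monoid free product (coproduct) of the family {M_i : i ∈ I} is right ideal Howson if and only if each monoid M_i is right ideal Howson. -/
/-- `XS¹ = X ∪ XS` for a subset `X` of a semigroup `S`. -/
def RS1 {S : Type*} [Semigroup S] (X : Set S) : Set S :=
  X ∪ {y | ∃ x ∈ X, ∃ s : S, y = x * s}

/-- A finitely generated right ideal: a set of the form `XS¹` with `X` finite. -/
def FGRightIdeal {S : Type*} [Semigroup S] (I : Set S) : Prop :=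
  ∃ X : Finset S, I = RS1 (↑X : Set S)

/-- A semigroup is right ideal Howson if the intersection of any two finitely
generated right ideals is finitely generated. -/
def RIH (S : Type*) [Semigroup S] : Prop :=
  ∀ I J : Set S, FGRightIdeal I → FGRightIdeal J → FGRightIdeal (I ∩ J)

/-!
In a monoid `XS¹` is the union of the principal right ideals `xS`, `x ∈ X`, so being right ideal
Howson only has to be checked on pairs of principal right ideals. Each factor `Mᵢ` is a retract of
the free product, and the property passes to retracts.

Conversely, let `S` be the free product. If the reduced word of `u` is `L a` with `ac = 1` for
some `c`, then `uS = LS`; stripping such letters shows that every `uS` equals `S` or `u'S`, where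
the reduced word of `u'` is `L a` and the letter `a ∈ Mᵢ` has no right inverse. For such `u`, `uS`
consists exactly of the elements whose reduced word begins with `L (ac)` for some `c ∈ Mᵢ`.
Comparing these prefixes, two such ideals are disjoint, nested, or share `L` and `i`; in the last
case their intersection is generated by `L z` for `z` running over generators of `aMᵢ ∩ a'Mᵢ`.
-/

section Monoid

variable {S T : Type*} [Monoid S] [Monoid T]

theorem mem_RS1 {X : Set S} {y : S} : y ∈ RS1 X ↔ ∃ x ∈ X, ∃ s, y = x * s := by
  refine ⟨?_, Or.inr⟩
  rintro (hy | hy)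
  · exact ⟨y, hy, 1, (mul_one y).symm⟩
  · exact hy

theorem mem_RS1_singleton {u y : S} : y ∈ RS1 {u} ↔ ∃ s, y = u * s := by
  simp [mem_RS1]

theorem mul_mem_RS1_singleton (u s : S) : u * s ∈ RS1 {u} :=
  mem_RS1_singleton.2 ⟨s, rfl⟩

theorem RS1_union (X Y : Set S) : RS1 (X ∪ Y) = RS1 X ∪ RS1 Y := by
  ext y
  simp only [mem_RS1, Set.mem_union, or_and_right, exists_or]

theorem RS1_one : RS1 ({1} : Set S) = Set.univ :=
  Set.eq_univ_of_forall fun y => mem_RS1_singleton.2 ⟨y, (one_mul y).symm⟩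

theorem RS1_singleton_subset {u v x : S} (h : v = u * x) : RS1 {v} ⊆ RS1 {u} := by
  intro y hy
  obtain ⟨s, rfl⟩ := mem_RS1_singleton.1 hy
  exact mem_RS1_singleton.2 ⟨x * s, by rw [h, mul_assoc]⟩

theorem fgRightIdeal_empty : FGRightIdeal (∅ : Set S) :=
  ⟨∅, by simp [RS1]⟩

theorem fgRightIdeal_RS1_singleton (u : S) : FGRightIdeal (RS1 {u}) :=
  ⟨{u}, by simp⟩

theorem FGRightIdeal.union {I J : Set S} (hI : FGRightIdeal I) (hJ : FGRightIdeal J) :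
    FGRightIdeal (I ∪ J) := by
  classical
  obtain ⟨X, rfl⟩ := hI
  obtain ⟨Y, rfl⟩ := hJ
  exact ⟨X ∪ Y, by rw [Finset.coe_union, RS1_union]⟩

theorem FGRightIdeal.inter_RS1_finset {I : Set S} (h : ∀ y, FGRightIdeal (I ∩ RS1 {y}))
    (Y : Finset S) : FGRightIdeal (I ∩ RS1 (Y : Set S)) := by
  classical
  induction Y using Finset.induction_on with
  | empty => simpa [RS1] using fgRightIdeal_empty
  | insert y Y _ ih =>
    rw [Finset.coe_insert, Set.insert_eq, RS1_union, Set.inter_union_distrib_left]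
    exact (h y).union ih

theorem rih_of_forall_fgRightIdeal_inter (h : ∀ u v : S, FGRightIdeal (RS1 {u} ∩ RS1 {v})) :
    RIH S := by
  rintro _ _ ⟨X, rfl⟩ ⟨Y, rfl⟩
  rw [Set.inter_comm]
  refine FGRightIdeal.inter_RS1_finset (fun x => ?_) X
  rw [Set.inter_comm]
  exact FGRightIdeal.inter_RS1_finset (h x) Y

theorem RIH.of_leftInverse {f : S →* T} {g : T →* S} (hfg : Function.LeftInverse f g)
    (hS : RIH S) : RIH T := by
  classical
  refine rih_of_forall_fgRightIdeal_inter fun u v => ?_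
  obtain ⟨Z, hZ⟩ := hS _ _ (fgRightIdeal_RS1_singleton (g u)) (fgRightIdeal_RS1_singleton (g v))
  refine ⟨Z.image f, Set.Subset.antisymm ?_ ?_⟩
  · rintro w ⟨hwu, hwv⟩
    obtain ⟨s, rfl⟩ := mem_RS1_singleton.1 hwu
    obtain ⟨t, hst⟩ := mem_RS1_singleton.1 hwv
    have hgw : g (u * s) ∈ RS1 (Z : Set S) := by
      rw [← hZ, map_mul]
      refine ⟨mul_mem_RS1_singleton _ _, ?_⟩
      rw [← map_mul, hst, map_mul]
      exact mul_mem_RS1_singleton _ _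
    obtain ⟨z, hz, r, hzr⟩ := mem_RS1.1 hgw
    refine mem_RS1.2 ⟨f z, by simpa using ⟨z, hz, rfl⟩, f r, ?_⟩
    rw [← map_mul, ← hzr, hfg]
  · intro w hw
    obtain ⟨_, hfz, r, rfl⟩ := mem_RS1.1 hw
    obtain ⟨z, hz, rfl⟩ : ∃ z ∈ Z, f z = _ := by simpa using hfz
    have hzZ : z ∈ RS1 {g u} ∩ RS1 {g v} := hZ ▸ Or.inl hz
    have hmap : ∀ {x : T}, z ∈ RS1 {g x} → f z * r ∈ RS1 {x} := by
      intro x hx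
      obtain ⟨p, rfl⟩ := mem_RS1_singleton.1 hx
      exact mem_RS1_singleton.2 ⟨f p * r, by rw [map_mul, hfg, mul_assoc]⟩
    exact ⟨hmap hzZ.1, hmap hzZ.2⟩

end Monoid

theorem List.append_singleton_inj_of_prefix {α : Type*} {l l₁ l₂ : List α} {x y : α}
    (h₁ : l₁ ++ [x] <+: l) (h₂ : l₂ ++ [y] <+: l) (hlen : l₁.length = l₂.length) :
    l₁ = l₂ ∧ x = y := by
  have h := (List.prefix_of_prefix_length_le h₁ h₂ (by simp [hlen])).eq_of_length (by simp [hlen])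
  exact List.append_inj' h rfl |>.imp id (by simp)

namespace Monoid.CoprodI

variable {ι : Type*} {M : ι → Type*} [∀ i, Monoid (M i)]

def listProd (l : List (Σ i, M i)) : CoprodI M :=
  (l.map fun x => of x.2).prod

@[simp] theorem listProd_nil : listProd ([] : List (Σ i, M i)) = 1 := rfl

@[simp] theorem listProd_cons (x : Σ i, M i) (l : List (Σ i, M i)) :
    listProd (x :: l) = of x.2 * listProd l := by
  simp [listProd]

@[simp] theorem listProd_append (l l' : List (Σ i, M i)) :
    listProd (l ++ l') = listProd l * listProd l' := by
  simp [listProd]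

variable [DecidableEq ι] [∀ i, DecidableEq (M i)]

theorem eq_listProd_of_toList_equiv_eq {u : CoprodI M} {l : List (Σ i, M i)}
    (h : (Word.equiv u).toList = l) : u = listProd l := by
  rw [← h]
  exact (Word.equiv.symm_apply_apply u).symm

theorem toList_equiv_listProd {l : List (Σ i, M i)} (hne : ∀ x ∈ l, x.2 ≠ 1)
    (hchain : l.IsChain fun x y => x.1 ≠ y.1) : (Word.equiv (listProd l)).toList = l :=
  congrArg Word.toList (Word.equiv.apply_symm_apply ⟨l, hne, hchain⟩)

theorem toList_equiv_listProd_of_prefix {w : Word M} {l : List (Σ i, M i)} (h : l <+: w.toList) :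
    (Word.equiv (listProd l)).toList = l :=
  toList_equiv_listProd (fun x hx => w.ne_one x (h.subset hx)) (w.chain_ne.prefix h)

theorem toList_equiv_mul_of_forall_mul_ne_one {u : CoprodI M} {L : List (Σ i, M i)} {i : ι}
    {a : M i} (hu : (Word.equiv u).toList = L ++ [⟨i, a⟩]) (ha : ∀ c, a * c ≠ 1)
    (s : CoprodI M) : ∃ c : M i, ∃ t, (Word.equiv (u * s)).toList = L ++ ⟨i, a * c⟩ :: t := by
  -- `a` absorbs the `Mᵢ`-head of the word of `s`; as `a` has no right inverse, the product is
  -- never `1`, so no cancellation reaches `L`.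
  set p := Word.equivPair i (Word.equiv s)
  refine ⟨p.head, p.tail.toList, ?_⟩
  have hs : s = of p.head * listProd p.tail.toList := by
    have := congrArg Word.prod (Word.equivPair_head_smul_equivPair_tail (i := i) (Word.equiv s))
    rw [Word.prod_smul] at this
    exact (Word.equiv.symm_apply_apply s).symm.trans this.symm
  have hprod : u * s = listProd (L ++ ⟨i, a * p.head⟩ :: p.tail.toList) := by
    rw [eq_listProd_of_toList_equiv_eq hu, hs]
    simp [mul_assoc]
  have hchain := (Word.equiv u).chain_ne
  rw [hu, List.isChain_append] at hchain
  obtain ⟨hL, -, hlast⟩ := hchain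
  rw [hprod]
  apply toList_equiv_listProd
  · intro x hx
    simp only [List.mem_append, List.mem_cons] at hx
    rcases hx with hx | rfl | hx
    · exact (Word.equiv u).ne_one x (by simp [hu, hx])
    · exact ha _
    · exact p.tail.ne_one x hx
  · refine List.isChain_append.2 ⟨hL, List.isChain_cons.2 ⟨?_, p.tail.chain_ne⟩, ?_⟩
    · exact Word.fstIdx_ne_iff.1 p.fstIdx_ne
    · intro x hx y hy
      obtain rfl : ⟨i, a * p.head⟩ = y := by simpa using hy
      exact hlast x hx ⟨i, a⟩ rfl

theorem mem_RS1_singleton_iff_prefix {u : CoprodI M} {L : List (Σ i, M i)} {i : ι} {a : M i}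
    (hu : (Word.equiv u).toList = L ++ [⟨i, a⟩]) (ha : ∀ c, a * c ≠ 1) {w : CoprodI M} :
    w ∈ RS1 {u} ↔ ∃ c : M i, L ++ [⟨i, a * c⟩] <+: (Word.equiv w).toList := by
  rw [mem_RS1_singleton]
  constructor
  · rintro ⟨s, rfl⟩
    obtain ⟨c, t, h⟩ := toList_equiv_mul_of_forall_mul_ne_one hu ha s
    exact ⟨c, t, by simp [h]⟩
  · rintro ⟨c, t, h⟩
    refine ⟨of c * listProd t, ?_⟩
    rw [eq_listProd_of_toList_equiv_eq h.symm, eq_listProd_of_toList_equiv_eq hu]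
    simp [mul_assoc]

theorem exists_RS1_singleton_eq (u : CoprodI M) :
    ∃ u', RS1 {u} = RS1 {u'} ∧ (u' = 1 ∨ ∃ L i, ∃ a : M i,
      (Word.equiv u').toList = L ++ [⟨i, a⟩] ∧ ∀ c, a * c ≠ 1) := by
  rcases List.eq_nil_or_concat (Word.equiv u).toList with h | ⟨L, ⟨i, a⟩, h⟩
  · exact ⟨u, rfl, Or.inl (eq_listProd_of_toList_equiv_eq h)⟩
  rw [List.concat_eq_append] at h
  by_cases ha : ∃ c, a * c = 1
  · obtain ⟨c, hc⟩ := ha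
    have hL : (Word.equiv (listProd L)).toList = L :=
      toList_equiv_listProd_of_prefix (h ▸ List.prefix_append L _)
    have hu : u = listProd L * of a := by
      simp [eq_listProd_of_toList_equiv_eq h]
    have hRS1 : RS1 {u} = RS1 {listProd L} := by
      refine (RS1_singleton_subset hu).antisymm (RS1_singleton_subset (x := of c) ?_)
      rw [hu, mul_assoc, ← map_mul, hc, map_one, mul_one]
    obtain ⟨u', hu', hclean⟩ := exists_RS1_singleton_eq (listProd L)
    exact ⟨u', hRS1.trans hu', hclean⟩
  · push Not at ha
    exact ⟨u, rfl, Or.inr ⟨L, i, a, h, ha⟩⟩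
termination_by (Word.equiv u).toList.length
decreasing_by rw [hL, h]; simp

section Intersection

variable {u v : CoprodI M} {L L' : List (Σ i, M i)} {i i' : ι} {a : M i} {a' : M i'}

theorem RS1_singleton_subset_of_inter_nonempty (hu : (Word.equiv u).toList = L ++ [⟨i, a⟩])
    (ha : ∀ c, a * c ≠ 1) (hv : (Word.equiv v).toList = L' ++ [⟨i', a'⟩])
    (ha' : ∀ c, a' * c ≠ 1) (hlen : L.length < L'.length)
    (hne : (RS1 {u} ∩ RS1 {v}).Nonempty) : RS1 {v} ⊆ RS1 {u} := by
  obtain ⟨w, hwu, hwv⟩ := hne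
  obtain ⟨c, hc⟩ := (mem_RS1_singleton_iff_prefix hu ha).1 hwu
  obtain ⟨c', hc'⟩ := (mem_RS1_singleton_iff_prefix hv ha').1 hwv
  have hprefix : L ++ [⟨i, a * c⟩] <+: L' := by
    rcases List.prefix_concat_iff.1 (List.prefix_of_prefix_length_le hc hc' (by simp; omega))
      with h | h
    · exact absurd (congrArg List.length h) (by simp; omega)
    · exact h
  intro x hx
  obtain ⟨d, hd⟩ := (mem_RS1_singleton_iff_prefix hv ha').1 hx
  exact (mem_RS1_singleton_iff_prefix hu ha).2 ⟨c, hprefix.trans ((List.prefix_append _ _).trans hd)⟩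

theorem eq_of_RS1_inter_nonempty (hu : (Word.equiv u).toList = L ++ [⟨i, a⟩])
    (ha : ∀ c, a * c ≠ 1) (hv : (Word.equiv v).toList = L' ++ [⟨i', a'⟩])
    (ha' : ∀ c, a' * c ≠ 1) (hlen : L.length = L'.length)
    (hne : (RS1 {u} ∩ RS1 {v}).Nonempty) : L = L' ∧ i = i' := by
  obtain ⟨w, hwu, hwv⟩ := hne
  obtain ⟨c, hc⟩ := (mem_RS1_singleton_iff_prefix hu ha).1 hwu
  obtain ⟨c', hc'⟩ := (mem_RS1_singleton_iff_prefix hv ha').1 hwv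
  obtain ⟨hL, hx⟩ := List.append_singleton_inj_of_prefix hc hc' hlen
  exact ⟨hL, congrArg Sigma.fst hx⟩

theorem fgRightIdeal_RS1_inter_of_toList_eq {a' : M i}
    (hu : (Word.equiv u).toList = L ++ [⟨i, a⟩]) (ha : ∀ c, a * c ≠ 1)
    (hv : (Word.equiv v).toList = L ++ [⟨i, a'⟩]) (ha' : ∀ c, a' * c ≠ 1) (hM : RIH (M i)) :
    FGRightIdeal (RS1 {u} ∩ RS1 {v}) := by
  classical
  obtain ⟨Z, hZ⟩ := hM _ _ (fgRightIdeal_RS1_singleton a) (fgRightIdeal_RS1_singleton a')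
  refine ⟨Z.image fun z => listProd L * of z, Set.Subset.antisymm ?_ ?_⟩
  · rintro w ⟨hwu, hwv⟩
    obtain ⟨c, t, hc⟩ := (mem_RS1_singleton_iff_prefix hu ha).1 hwu
    obtain ⟨c', hc'⟩ := (mem_RS1_singleton_iff_prefix hv ha').1 hwv
    have hac : a * c = a' * c' := by
      simpa using (List.append_singleton_inj_of_prefix ⟨t, hc⟩ hc' rfl).2
    have hacZ : a * c ∈ RS1 (Z : Set (M i)) :=
      hZ ▸ ⟨mul_mem_RS1_singleton a c, hac ▸ mul_mem_RS1_singleton a' c'⟩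
    obtain ⟨z, hz, d, hzd⟩ := mem_RS1.1 hacZ
    refine mem_RS1.2 ⟨_, Finset.mem_coe.2 (Finset.mem_image_of_mem _ hz), of d * listProd t, ?_⟩
    rw [eq_listProd_of_toList_equiv_eq hc.symm]
    simp [hzd, mul_assoc]
  · intro w hw
    obtain ⟨_, hzL, r, rfl⟩ := mem_RS1.1 hw
    obtain ⟨z, hz, rfl⟩ : ∃ z ∈ Z, listProd L * of z = _ := by simpa using hzL
    have hzZ : z ∈ RS1 {a} ∩ RS1 {a'} := hZ ▸ Or.inl hz
    have hmem : ∀ {x : M i} {y : CoprodI M}, (Word.equiv y).toList = L ++ [⟨i, x⟩] →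
        z ∈ RS1 {x} → listProd L * of z * r ∈ RS1 {y} := by
      intro x y hy hx
      obtain ⟨d, rfl⟩ := mem_RS1_singleton.1 hx
      exact mem_RS1_singleton.2 ⟨of d * r, by simp [eq_listProd_of_toList_equiv_eq hy, mul_assoc]⟩
    exact ⟨hmem hu hzZ.1, hmem hv hzZ.2⟩

theorem fgRightIdeal_RS1_inter_of_length_le (hu : (Word.equiv u).toList = L ++ [⟨i, a⟩])
    (ha : ∀ c, a * c ≠ 1) (hv : (Word.equiv v).toList = L' ++ [⟨i', a'⟩])
    (ha' : ∀ c, a' * c ≠ 1) (hlen : L.length ≤ L'.length) (hM : RIH (M i)) :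
    FGRightIdeal (RS1 {u} ∩ RS1 {v}) := by
  rcases (RS1 {u} ∩ RS1 {v}).eq_empty_or_nonempty with h | h
  · rw [h]
    exact fgRightIdeal_empty
  rcases hlen.lt_or_eq with hlt | heq
  · rw [Set.inter_eq_right.2 (RS1_singleton_subset_of_inter_nonempty hu ha hv ha' hlt h)]
    exact fgRightIdeal_RS1_singleton v
  · obtain ⟨rfl, rfl⟩ := eq_of_RS1_inter_nonempty hu ha hv ha' heq h
    exact fgRightIdeal_RS1_inter_of_toList_eq hu ha hv ha' hM

end Intersection

theorem fgRightIdeal_RS1_inter (hM : ∀ i, RIH (M i)) (u v : CoprodI M) :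
    FGRightIdeal (RS1 {u} ∩ RS1 {v}) := by
  obtain ⟨u', hu, rfl | ⟨L, i, a, hL, ha⟩⟩ := exists_RS1_singleton_eq u
  · rw [hu, RS1_one, Set.univ_inter]
    exact fgRightIdeal_RS1_singleton v
  obtain ⟨v', hv, rfl | ⟨L', i', a', hL', ha'⟩⟩ := exists_RS1_singleton_eq v
  · rw [hv, RS1_one, Set.inter_univ, hu]
    exact fgRightIdeal_RS1_singleton u'
  rw [hu, hv]
  rcases le_total L.length L'.length with h | h
  · exact fgRightIdeal_RS1_inter_of_length_le hL ha hL' ha' h (hM i)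
  · rw [Set.inter_comm]
    exact fgRightIdeal_RS1_inter_of_length_le hL' ha' hL ha h (hM i')

end Monoid.CoprodI

theorem stmt8 {ι : Type*} (M : ι → Type*) [∀ i, Monoid (M i)] :
    RIH (Monoid.CoprodI M) ↔ ∀ i, RIH (M i) := by
  classical
  exact ⟨fun h i => h.of_leftInverse (Monoid.CoprodI.of_leftInverse i),
    fun h => rih_of_forall_fgRightIdeal_inter (Monoid.CoprodI.fgRightIdeal_RS1_inter h)⟩
end

section
/- Let S and T be semigroups such that for each b ∈ T there exist a ∈ S and a semigroup homomorphism φ : S → T with φ(a) = b and φ(r_S(a)) = r_T(b), where φ applied to a relation X means {(φ(x), φ(y)) : (x,y) ∈ X}. If S is finitely right equated, then so is T. -/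
/-- The right annihilator congruence `r_S(a) = {(s,t) : a*s = a*t}`. -/
def rAnn {S : Type*} [Semigroup S] (a : S) : S → S → Prop :=
  fun s t => a * s = a * t

/-- A right congruence on a semigroup: an equivalence relation compatible with
right multiplication. -/
def IsRightCong {S : Type*} [Semigroup S] (ρ : S → S → Prop) : Prop :=
  Equivalence ρ ∧ ∀ a b s : S, ρ a b → ρ (a * s) (b * s)

/-- The smallest right congruence containing the relation `X`. -/
def rcGen {S : Type*} [Semigroup S] (X : S → S → Prop) : S → S → Prop :=
  fun a b => ∀ ρ : S → S → Prop, IsRightCong ρ → (∀ x y, X x y → ρ x y) → ρ a b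

/-- A right congruence is finitely generated if it is generated by a finite
set of pairs. -/
def FGRightCong {S : Type*} [Semigroup S] (ρ : S → S → Prop) : Prop :=
  ∃ X : Finset (S × S), ρ = rcGen (fun a b => (a, b) ∈ X)

/-- A semigroup is finitely right equated if every right annihilator
congruence is finitely generated. -/
def FRE (S : Type*) [Semigroup S] : Prop :=
  ∀ a : S, FGRightCong (rAnn a)

/-!
If `X` generates `r_S(a)`, then `φ X` generates `r_T(b) = φ(r_S(a))`: the image of `⟨X⟩` lies in
`⟨φ X⟩` because pulling a right congruence back along a homomorphism gives a right congruence,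
and conversely `φ X ⊆ r_T(b)`, which is itself a right congruence.
-/

section

variable {S T : Type*} [Semigroup S] [Semigroup T]

theorem isRightCong_rAnn (a : S) : IsRightCong (rAnn a) :=
  ⟨⟨fun _ => rfl, Eq.symm, Eq.trans⟩, fun u v w (huv : a * u = a * v) => by
    simp only [rAnn, ← mul_assoc, huv]⟩

theorem IsRightCong.comap {ρ : T → T → Prop} (hρ : IsRightCong ρ) (φ : S →ₙ* T) :
    IsRightCong (fun u v => ρ (φ u) (φ v)) :=
  ⟨⟨fun _ => hρ.1.refl _, hρ.1.symm, hρ.1.trans⟩, fun u v w huv => by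
    simpa only [map_mul] using hρ.2 _ _ (φ w) huv⟩

theorem rcGen_of_rel {X : S → S → Prop} {x y : S} (hxy : X x y) : rcGen X x y :=
  fun _ _ hX => hX x y hxy

theorem rcGen_map {X : S → S → Prop} {Y : T → T → Prop} (φ : S →ₙ* T)
    (hXY : ∀ x y, X x y → Y (φ x) (φ y)) {s s' : S} (h : rcGen X s s') :
    rcGen Y (φ s) (φ s') :=
  fun _ hρ hY => h _ (hρ.comap φ) fun x y hxy => hY _ _ (hXY x y hxy)

theorem FGRightCong.of_map {ρ : S → S → Prop} {σ : T → T → Prop} (hρ : FGRightCong ρ)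
    (hσ : IsRightCong σ) (φ : S →ₙ* T)
    (hmap : ∀ t t', σ t t' ↔ ∃ s s', ρ s s' ∧ φ s = t ∧ φ s' = t') :
    FGRightCong σ := by
  classical
  obtain ⟨X, rfl⟩ := hρ
  refine ⟨X.image (Prod.map φ φ), funext₂ fun t t' => propext ⟨?_, ?_⟩⟩
  · intro hσtt'
    obtain ⟨s, s', hss', rfl, rfl⟩ := (hmap t t').mp hσtt'
    exact rcGen_map φ (fun x y hxy => Finset.mem_image_of_mem (Prod.map φ φ) hxy) hss'
  · refine fun h => h σ hσ fun x y hxy => ?_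
    obtain ⟨⟨u, v⟩, huv, hx⟩ := Finset.mem_image.mp hxy
    obtain ⟨rfl, rfl⟩ := Prod.ext_iff.mp hx
    exact (hmap _ _).mpr ⟨u, v, rcGen_of_rel huv, rfl, rfl⟩

end

theorem stmt14 {S T : Type*} [Semigroup S] [Semigroup T]
    (h : ∀ b : T, ∃ (a : S) (φ : S →ₙ* T), φ a = b ∧
      (∀ t t' : T, rAnn b t t' ↔ ∃ s s' : S, rAnn a s s' ∧ φ s = t ∧ φ s' = t'))
    (hS : FRE S) : FRE T := by
  intro b
  obtain ⟨a, φ, -, hφ⟩ := h b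
  exact (hS a).of_map (isRightCong_rAnn b) φ hφ
end
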